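/- Let B and C be real symmetric positive definite n×n matrices and b, c ∈ ℝⁿ with b not contained in the ellipsoid E(C, c). Set C̄ = B^{-1/2} C B^{-1/2}, c̄ = B^{1/2}(c − b), C̃ = C̄^{-1}, c̃ = C̄^{-1/2} c̄, and let M' be the 2n×2n block matrix with blocks [[C̃, −I], [−c̃c̃ᵀ, C̃]]. Then M' has at least one real eigenvalue; letting λ₀(M') denote its smallest real eigenvalue, the matrix λ₀(M')I − C̃ is invertible, and the point x* = b + λ₀(M') B^{-1/2} (λ₀(M')I − C̃)^{-1} c̄ is the unique minimizer of the function x ↦ (x − b)ᵀB(x − b) over the ellipsoid E(C, c). -/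

import Mathlib

/-!
In the coordinates `y = B^{1/2} (x - b)` the objective becomes `|y|²` and `E(C, c)` becomes
`E(C̄, c̄)`. For `ν = -λ ≥ 0` the point `y_λ = ν (C̃ + ν)⁻¹ c̄` satisfies the Lagrange condition
`y_λ + ν C̄ (y_λ - c̄) = 0`, so it is the unique point of least norm in `E(C̄, c̄)` as soon as it
lies on the boundary. That happens exactly when the secular function
`f(λ) = |(C̃ - λ)⁻¹ c̃|²` equals `1`. On `(-∞, 0]` this function is continuous and strictly
increasing, `f(0) = (c - b)ᵀ C (c - b) > 1` because `b ∉ E(C, c)`, and `λ² f(λ) ≤ |c̃|²`, so it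
takes the value `1` at exactly one `λ₀ < 0`.

An eigenvector of `M'` for `λ` has the form `(u, (C̃ - λ) u)` with `(C̃ - λ)² u = (c̃ ⬝ u) c̃`, so
for `λ ≤ 0` it exists iff `f(λ) = 1`. Hence `λ₀` is the smallest real eigenvalue of `M'`.
-/

open Matrix

def ellipsoid {n : ℕ} (A : Matrix (Fin n) (Fin n) ℝ) (a : Fin n → ℝ) : Set (Fin n → ℝ) :=
  {x | (x - a) ⬝ᵥ A.mulVec (x - a) ≤ 1}

namespace Matrix

section Symmetric

variable {ι R : Type*} [Fintype ι] [CommSemiring R] {S : Matrix ι ι R}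

theorem IsSymm.dotProduct_mulVec_comm (hS : S.IsSymm) (u v : ι → R) :
    u ⬝ᵥ S *ᵥ v = S *ᵥ u ⬝ᵥ v := by
  rw [dotProduct_mulVec, ← mulVec_transpose, hS.eq]

theorem IsSymm.dotProduct_mulVec_mul_mul_self (hS : S.IsSymm) (K : Matrix ι ι R) (x : ι → R) :
    S *ᵥ x ⬝ᵥ K *ᵥ (S *ᵥ x) = x ⬝ᵥ (S * K * S) *ᵥ x := by
  rw [← hS.dotProduct_mulVec_comm, mulVec_mulVec, mulVec_mulVec, Matrix.mul_assoc]

theorem IsSymm.mulVec_dotProduct_mulVec_self (hS : S.IsSymm) (x : ι → R) :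
    S *ᵥ x ⬝ᵥ S *ᵥ x = x ⬝ᵥ (S * S) *ᵥ x := by
  rw [← hS.dotProduct_mulVec_comm, mulVec_mulVec]

end Symmetric

section NonsingInv

variable {ι R : Type*} [Fintype ι] [DecidableEq ι] [CommRing R] {A : Matrix ι ι R}

theorem mulVec_nonsing_inv_mulVec (hA : IsUnit A) (v : ι → R) : A *ᵥ (A⁻¹ *ᵥ v) = v := by
  rw [mulVec_mulVec, mul_nonsing_inv _ ((isUnit_iff_isUnit_det A).mp hA), one_mulVec]

theorem nonsing_inv_mulVec_mulVec (hA : IsUnit A) (v : ι → R) : A⁻¹ *ᵥ (A *ᵥ v) = v := by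
  rw [mulVec_mulVec, nonsing_inv_mul _ ((isUnit_iff_isUnit_det A).mp hA), one_mulVec]

theorem nonsing_inv_neg (hA : IsUnit A) : (-A)⁻¹ = -A⁻¹ :=
  inv_eq_left_inv (by rw [neg_mul_neg, nonsing_inv_mul _ ((isUnit_iff_isUnit_det A).mp hA)])

theorem commute_nonsing_inv_right {B : Matrix ι ι R} (h : Commute A B) : Commute A B⁻¹ := by
  rw [nonsing_inv_eq_ringInverse]
  by_cases hB : IsUnit B
  · obtain ⟨B, rfl⟩ := hB
    rw [Ring.inverse_unit]
    exact h.units_inv_right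
  · rw [Ring.inverse_non_unit _ hB]
    exact Commute.zero_right A

theorem sub_smul_one_mulVec (A : Matrix ι ι R) (l : R) (w : ι → R) :
    (A - l • 1) *ᵥ w = A *ᵥ w - l • w := by
  rw [sub_mulVec, smul_mulVec, one_mulVec]

end NonsingInv

theorem mem_spectrum_iff_exists_mulVec_eq_smul {ι K : Type*} [Fintype ι] [DecidableEq ι] [Field K]
    {M : Matrix ι ι K} {l : K} : l ∈ spectrum K M ↔ ∃ z ≠ 0, M *ᵥ z = l • z := by
  rw [← spectrum_toLin', ← Module.End.hasEigenvalue_iff_mem_spectrum,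
    Module.End.hasEigenvalue_iff, Submodule.ne_bot_iff]
  simp only [Module.End.mem_eigenspace_iff, toLin'_apply]
  exact exists_congr fun z => and_comm

section PosDef

variable {ι : Type*} {A : Matrix ι ι ℝ}

theorem PosDef.isSymm (hA : A.PosDef) : A.IsSymm :=
  isHermitian_iff_isSymm.mp hA.isHermitian

theorem PosDef.mul_self [Fintype ι] [DecidableEq ι] (hA : A.PosDef) : (A * A).PosDef := by
  have h := PosDef.conjTranspose_mul_self A (mulVec_injective_iff_isUnit.mpr hA.isUnit)
  rwa [hA.isHermitian.eq] at h

theorem PosDef.sub_smul_one [DecidableEq ι] (hA : A.PosDef) {l : ℝ} (hl : l ≤ 0) :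
    (A - l • 1).PosDef := by
  rw [sub_eq_add_neg, ← neg_smul]
  exact hA.add_posSemidef (PosSemidef.one.smul (neg_nonneg.mpr hl))

end PosDef

end Matrix

section Secular

variable {ι : Type*} [Fintype ι] [DecidableEq ι] {A : Matrix ι ι ℝ} {v : ι → ℝ}

noncomputable def secularFun (A : Matrix ι ι ℝ) (v : ι → ℝ) (l : ℝ) : ℝ :=
  (A - l • 1)⁻¹ *ᵥ v ⬝ᵥ (A - l • 1)⁻¹ *ᵥ v

theorem secularFun_lt_secularFun (hA : A.PosDef) (hv : v ≠ 0) {l₁ l₂ : ℝ} (h₁₂ : l₁ < l₂)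
    (h₂ : l₂ ≤ 0) : secularFun A v l₁ < secularFun A v l₂ := by
  have hN₁ : IsUnit (A - l₁ • 1) := (hA.sub_smul_one (h₁₂.le.trans h₂)).isUnit
  have hN₂ : (A - l₂ • 1).PosDef := hA.sub_smul_one h₂
  set w := (A - l₁ • 1)⁻¹ *ᵥ v
  set u := (A - l₂ • 1)⁻¹ *ᵥ w
  have hNw : (A - l₁ • 1) *ᵥ w = v := mulVec_nonsing_inv_mulVec hN₁ v
  have hw : w ≠ 0 := fun h => hv (by rw [← hNw, h, mulVec_zero])
  have hresolvent : (A - l₂ • 1)⁻¹ *ᵥ v = w + (l₂ - l₁) • u := by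
    have hv : v = (A - l₂ • 1) *ᵥ w + (l₂ - l₁) • w := by
      rw [← hNw, sub_smul_one_mulVec, sub_smul_one_mulVec, sub_smul]
      abel
    rw [hv, mulVec_add, nonsing_inv_mulVec_mulVec hN₂.isUnit, mulVec_smul]
  have hwu : 0 < w ⬝ᵥ u := by simpa using hN₂.inv.dotProduct_mulVec_pos hw
  have huu : 0 ≤ u ⬝ᵥ u := by simpa using dotProduct_star_self_nonneg u
  unfold secularFun
  rw [hresolvent]
  simp only [dotProduct_add, add_dotProduct, dotProduct_smul, smul_dotProduct, smul_eq_mul,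
    dotProduct_comm u w]
  nlinarith [mul_pos (sub_pos.mpr h₁₂) hwu, mul_nonneg (sq_nonneg (l₂ - l₁)) huu]

theorem continuousOn_secularFun (hA : A.PosDef) (v : ι → ℝ) :
    ContinuousOn (secularFun A v) (Set.Iic 0) := by
  intro l hl
  have hinv : ContinuousAt (fun l : ℝ => (A - l • 1)⁻¹) l := by
    refine (continuousAt_matrix_inv _ ?_).comp (by fun_prop)
    rw [Ring.inverse_eq_inv']
    exact continuousAt_inv₀ ((hA.sub_smul_one hl).isUnit.map detMonoidHom).ne_zero
  unfold secularFun
  exact ContinuousAt.continuousWithinAt (by fun_prop)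

theorem sq_mul_secularFun_le (hA : A.PosDef) (v : ι → ℝ) {l : ℝ} (hl : l ≤ 0) :
    l ^ 2 * secularFun A v l ≤ v ⬝ᵥ v := by
  set w := (A - l • 1)⁻¹ *ᵥ v
  have hv : v = A *ᵥ w - l • w := by
    rw [← sub_smul_one_mulVec, mulVec_nonsing_inv_mulVec (hA.sub_smul_one hl).isUnit]
  have hAw : 0 ≤ w ⬝ᵥ A *ᵥ w := by simpa using hA.posSemidef.dotProduct_mulVec_nonneg w
  have hAwAw : 0 ≤ A *ᵥ w ⬝ᵥ A *ᵥ w := by simpa using dotProduct_star_self_nonneg (A *ᵥ w)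
  change l ^ 2 * (w ⬝ᵥ w) ≤ v ⬝ᵥ v
  rw [hv]
  simp only [dotProduct_sub, sub_dotProduct, dotProduct_smul, smul_dotProduct, smul_eq_mul,
    dotProduct_comm (A *ᵥ w) w]
  nlinarith [mul_nonneg (neg_nonneg.mpr hl) hAw]

theorem exists_secularFun_eq_one (hA : A.PosDef) (h₀ : 1 < secularFun A v 0) :
    ∃ l < 0, secularFun A v l = 1 := by
  set s := -(v ⬝ᵥ v + 1)
  have hvv : 0 ≤ v ⬝ᵥ v := by simpa using dotProduct_star_self_nonneg v
  have hs : s < 0 := by simp only [s]; linarith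
  have hfs : secularFun A v s < 1 := by
    by_contra! h
    nlinarith [sq_mul_secularFun_le hA v hs.le]
  obtain ⟨l, ⟨-, hl⟩, hfl⟩ := intermediate_value_Ioo hs.le
    ((continuousOn_secularFun hA v).mono Set.Icc_subset_Iic_self) ⟨hfs, h₀⟩
  exact ⟨l, hl, hfl⟩

theorem fromBlocks_mulVec_sumElim_eq_smul_iff (A : Matrix ι ι ℝ) (v u w : ι → ℝ) (l : ℝ) :
    fromBlocks A (-1) (-vecMulVec v v) A *ᵥ Sum.elim u w = l • Sum.elim u w ↔
      (A - l • 1) *ᵥ u = w ∧ (A - l • 1) *ᵥ w = (v ⬝ᵥ u) • v := by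
  have hsmul : l • Sum.elim u w = Sum.elim (l • u) (l • w) := by ext (i | i) <;> rfl
  rw [fromBlocks_mulVec, Sum.elim_comp_inl, Sum.elim_comp_inr, hsmul, Sum.elim_eq_iff,
    sub_smul_one_mulVec, sub_smul_one_mulVec, neg_mulVec, one_mulVec, neg_mulVec,
    vecMulVec_mulVec, op_smul_eq_smul]
  refine and_congr ?_ ?_ <;> constructor <;> intro h <;> linear_combination (norm := module) h

theorem mem_spectrum_fromBlocks_iff (hA : A.IsSymm) (v : ι → ℝ) {l : ℝ}
    (hl : IsUnit (A - l • 1)) :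
    l ∈ spectrum ℝ (fromBlocks A (-1) (-vecMulVec v v) A) ↔ secularFun A v l = 1 := by
  set N := A - l • 1
  have hNinv : N⁻¹.IsSymm := (hA.sub (isSymm_one.smul l)).inv
  rw [mem_spectrum_iff_exists_mulVec_eq_smul]
  constructor
  · rintro ⟨z, hz, hMz⟩
    rw [← Sum.elim_comp_inl_inr z] at hz hMz
    set u := z ∘ Sum.inl
    obtain ⟨hu, hw⟩ := (fromBlocks_mulVec_sumElim_eq_smul_iff A v u _ l).mp hMz
    have hu' : u = (v ⬝ᵥ u) • N⁻¹ *ᵥ (N⁻¹ *ᵥ v) := by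
      rw [← mulVec_smul, ← mulVec_smul, ← hw, ← hu, nonsing_inv_mulVec_mulVec hl,
        nonsing_inv_mulVec_mulVec hl]
    have hvu : v ⬝ᵥ u ≠ 0 := by
      intro h
      refine hz ?_
      rw [← hu, hu', h, zero_smul, mulVec_zero, Sum.elim_zero_zero]
    have hvu' : v ⬝ᵥ u * 1 = v ⬝ᵥ u * secularFun A v l := by
      rw [secularFun]
      conv_lhs => rw [hu']
      rw [dotProduct_smul, smul_eq_mul, mul_one, hNinv.dotProduct_mulVec_comm]
    exact (mul_left_cancel₀ hvu hvu').symm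
  · intro h
    have hw : N⁻¹ *ᵥ v ≠ 0 := fun h0 => by simp [secularFun, N, h0] at h
    refine ⟨Sum.elim (N⁻¹ *ᵥ (N⁻¹ *ᵥ v)) (N⁻¹ *ᵥ v), fun h0 => hw ?_,
      (fromBlocks_mulVec_sumElim_eq_smul_iff A v _ _ l).mpr
        ⟨mulVec_nonsing_inv_mulVec hl _, ?_⟩⟩
    · funext i
      simpa using congrFun h0 (Sum.inr i)
    · rw [mulVec_nonsing_inv_mulVec hl, hNinv.dotProduct_mulVec_comm]
      change v = secularFun A v l • v
      rw [h, one_smul]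

theorem isLeast_spectrum_fromBlocks (hA : A.PosDef) {l : ℝ} (hl : l ≤ 0)
    (hf : secularFun A v l = 1) :
    IsLeast (spectrum ℝ (fromBlocks A (-1) (-vecMulVec v v) A)) l := by
  have hv : v ≠ 0 := fun h0 => by simp [secularFun, h0] at hf
  refine ⟨(mem_spectrum_fromBlocks_iff hA.isSymm v (hA.sub_smul_one hl).isUnit).mpr hf,
    fun μ hμ => le_of_not_gt fun hμl => ?_⟩
  have hμ0 : μ ≤ 0 := hμl.le.trans hl
  rw [mem_spectrum_fromBlocks_iff hA.isSymm v (hA.sub_smul_one hμ0).isUnit] at hμ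
  exact (secularFun_lt_secularFun hA hv hμl hl).ne (hμ.trans hf.symm)

theorem secularFun_mul_self_inv {H : Matrix ι ι ℝ} (hH : H.IsSymm) (u : ι → ℝ) (μ : ℝ) :
    secularFun (H * H)⁻¹ (H⁻¹ *ᵥ u) μ =
      ((H * H)⁻¹ - μ • 1)⁻¹ *ᵥ u ⬝ᵥ (H * H)⁻¹ *ᵥ (((H * H)⁻¹ - μ • 1)⁻¹ *ᵥ u) := by
  have hcomm : Commute H⁻¹ ((H * H)⁻¹ - μ • 1)⁻¹ := by
    rw [Matrix.mul_inv_rev]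
    exact commute_nonsing_inv_right <| ((Commute.refl _).mul_right (Commute.refl _)).sub_right
      ((Commute.one_right _).smul_right μ)
  rw [secularFun, mulVec_mulVec, ← hcomm.eq, ← mulVec_mulVec,
    hH.inv.mulVec_dotProduct_mulVec_self, Matrix.mul_inv_rev]

theorem secularFun_mul_self_inv_zero {H : Matrix ι ι ℝ} (hH : H.IsSymm) (hHu : IsUnit H)
    (u : ι → ℝ) : secularFun (H * H)⁻¹ (H⁻¹ *ᵥ u) 0 = u ⬝ᵥ (H * H) *ᵥ u := by
  have hHH : IsUnit (H * H).det := (isUnit_iff_isUnit_det _).mp (hHu.mul hHu)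
  rw [secularFun, zero_smul, sub_zero, nonsing_inv_nonsing_inv _ hHH, mulVec_mulVec,
    Matrix.mul_assoc, mul_nonsing_inv _ ((isUnit_iff_isUnit_det H).mp hHu), Matrix.mul_one,
    hH.mulVec_dotProduct_mulVec_self]

end Secular

section Minimizer

variable {ι : Type*} [Fintype ι]

theorem neg_smul_inv_mulVec_sub [DecidableEq ι] {A : Matrix ι ι ℝ} {μ : ℝ}
    (hN : IsUnit (A - μ • 1)) (u : ι → ℝ) :
    -μ • (A - μ • 1)⁻¹ *ᵥ u - u = -(A *ᵥ ((A - μ • 1)⁻¹ *ᵥ u)) := by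
  set w := (A - μ • 1)⁻¹ *ᵥ u
  have hu : u = A *ᵥ w - μ • w := by
    rw [← sub_smul_one_mulVec, mulVec_nonsing_inv_mulVec hN]
  rw [hu]
  module

theorem dotProduct_self_lt_of_stationary {P : Matrix ι ι ℝ} (hP : P.PosSemidef) {ν : ℝ}
    (hν : 0 ≤ ν) {c y₀ y : ι → ℝ} (hstat : y₀ + ν • P *ᵥ (y₀ - c) = 0)
    (hy : (y - c) ⬝ᵥ P *ᵥ (y - c) ≤ (y₀ - c) ⬝ᵥ P *ᵥ (y₀ - c)) (hne : y ≠ y₀) :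
    y₀ ⬝ᵥ y₀ < y ⬝ᵥ y := by
  obtain ⟨d, rfl⟩ : ∃ d, y = y₀ + d := ⟨y - y₀, by abel⟩
  have hd : 0 < d ⬝ᵥ d := by
    have h := (dotProduct_star_self_pos_iff (v := d)).mpr fun h0 => hne (by rw [h0, add_zero])
    rwa [star_trivial] at h
  have hPd : 0 ≤ d ⬝ᵥ P *ᵥ d := by simpa using hP.dotProduct_mulVec_nonneg d
  have hdy₀ : d ⬝ᵥ y₀ + ν * (d ⬝ᵥ P *ᵥ (y₀ - c)) = 0 := by
    simpa only [dotProduct_add, dotProduct_smul, smul_eq_mul, dotProduct_zero]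
      using congrArg (d ⬝ᵥ ·) hstat
  have hsymm : (y₀ - c) ⬝ᵥ P *ᵥ d = d ⬝ᵥ P *ᵥ (y₀ - c) := by
    rw [(isHermitian_iff_isSymm.mp hP.isHermitian).dotProduct_mulVec_comm, dotProduct_comm]
  rw [show y₀ + d - c = (y₀ - c) + d by abel] at hy
  simp only [mulVec_add, dotProduct_add, add_dotProduct, hsymm, dotProduct_comm y₀ d] at hy ⊢
  nlinarith [mul_nonneg hν hPd]

theorem touching_point_of_ellipsoids_whitened [DecidableEq ι] {H : Matrix ι ι ℝ} (hH : H.PosDef)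
    (u : ι → ℝ) {μ : ℝ} (hμ : μ ≤ 0) (hf : secularFun (H * H)⁻¹ (H⁻¹ *ᵥ u) μ = 1) :
    let y₀ := -μ • ((H * H)⁻¹ - μ • 1)⁻¹ *ᵥ u
    (y₀ - u) ⬝ᵥ (H * H) *ᵥ (y₀ - u) = 1 ∧
      ∀ y, (y - u) ⬝ᵥ (H * H) *ᵥ (y - u) ≤ 1 → y ≠ y₀ → y₀ ⬝ᵥ y₀ < y ⬝ᵥ y := by
  intro y₀
  set P := H * H
  have hP : P.PosDef := hH.mul_self
  set R := (P⁻¹ - μ • 1)⁻¹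
  have hsub : y₀ - u = -(P⁻¹ *ᵥ (R *ᵥ u)) :=
    neg_smul_inv_mulVec_sub (hP.inv.sub_smul_one hμ).isUnit u
  have hPsub : P *ᵥ (y₀ - u) = -(R *ᵥ u) := by
    rw [hsub, mulVec_neg, mulVec_nonsing_inv_mulVec hP.isUnit]
  have hbd : (y₀ - u) ⬝ᵥ P *ᵥ (y₀ - u) = 1 := by
    rw [hPsub, hsub, neg_dotProduct_neg, ← hP.inv.isSymm.dotProduct_mulVec_comm, ← hf,
      secularFun_mul_self_inv hH.isSymm]
  refine ⟨hbd, fun y hy hne => dotProduct_self_lt_of_stationary hP.posSemidef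
    (neg_nonneg.mpr hμ) ?_ (hy.trans hbd.ge) hne⟩
  rw [hPsub, smul_neg]
  exact add_neg_cancel _

end Minimizer

theorem mem_ellipsoid_iff_mulVec_sub {n : ℕ} {S : Matrix (Fin n) (Fin n) ℝ} (hS : S.IsSymm)
    (hSu : IsUnit S) (C : Matrix (Fin n) (Fin n) ℝ) (b c x : Fin n → ℝ) :
    x ∈ ellipsoid C c ↔ S *ᵥ (x - b) ∈ ellipsoid (S⁻¹ * C * S⁻¹) (S *ᵥ (c - b)) := by
  have hS' := (isUnit_iff_isUnit_det S).mp hSu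
  simp only [ellipsoid, Set.mem_ofPred_eq]
  rw [← mulVec_sub, sub_sub_sub_cancel_right, hS.dotProduct_mulVec_mul_mul_self,
    ← Matrix.mul_assoc, ← Matrix.mul_assoc, mul_nonsing_inv _ hS', Matrix.one_mul,
    Matrix.mul_assoc, nonsing_inv_mul _ hS', Matrix.mul_one]

theorem touching_point_of_ellipsoids_general
    {n : ℕ} (B C : Matrix (Fin n) (Fin n) ℝ)
    (b c : Fin n → ℝ) (hb : b ∉ ellipsoid C c)
    (Bhalf : Matrix (Fin n) (Fin n) ℝ) (hBhalf : Bhalf.PosDef) (hBsq : Bhalf * Bhalf = B)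
    (Cbarhalf : Matrix (Fin n) (Fin n) ℝ) (hCbarhalf : Cbarhalf.PosDef)
    (hCbarsq : Cbarhalf * Cbarhalf = Bhalf⁻¹ * C * Bhalf⁻¹) :
    let Ctil : Matrix (Fin n) (Fin n) ℝ := (Bhalf⁻¹ * C * Bhalf⁻¹)⁻¹
    let cbar : Fin n → ℝ := Bhalf.mulVec (c - b)
    let ctil : Fin n → ℝ := Cbarhalf⁻¹.mulVec cbar
    let M' : Matrix (Fin n ⊕ Fin n) (Fin n ⊕ Fin n) ℝ :=
      Matrix.fromBlocks Ctil (-1) (-(vecMulVec ctil ctil)) Ctil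
    ∃ lam0 : ℝ, IsLeast (spectrum ℝ M') lam0 ∧
      IsUnit (lam0 • (1 : Matrix (Fin n) (Fin n) ℝ) - Ctil) ∧
      (let xstar : Fin n → ℝ :=
        b + lam0 • (Bhalf⁻¹ * (lam0 • (1 : Matrix (Fin n) (Fin n) ℝ) - Ctil)⁻¹).mulVec cbar
       xstar ∈ ellipsoid C c ∧
       ∀ x ∈ ellipsoid C c, x ≠ xstar →
         (xstar - b) ⬝ᵥ B.mulVec (xstar - b) < (x - b) ⬝ᵥ B.mulVec (x - b)) := by
  intro Ctil cbar ctil M'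
  have hS : Bhalf.IsSymm := hBhalf.isSymm
  have hCtil : Ctil = (Cbarhalf * Cbarhalf)⁻¹ := by rw [hCbarsq]
  have hCtilPD : Ctil.PosDef := hCtil ▸ hCbarhalf.mul_self.inv
  have hmem : ∀ x, x ∈ ellipsoid C c ↔ Bhalf *ᵥ (x - b) ∈ ellipsoid (Cbarhalf * Cbarhalf) cbar :=
    fun x => by rw [hCbarsq]; exact mem_ellipsoid_iff_mulVec_sub hS hBhalf.isUnit C b c x
  have hobj : ∀ x, (x - b) ⬝ᵥ B *ᵥ (x - b) = Bhalf *ᵥ (x - b) ⬝ᵥ Bhalf *ᵥ (x - b) :=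
    fun x => by rw [← hBsq, hS.mulVec_dotProduct_mulVec_self]
  have hf₀ : 1 < secularFun Ctil ctil 0 := by
    have hb' := (hmem b).not.mp hb
    simp only [ellipsoid, Set.mem_ofPred_eq, sub_self, mulVec_zero, zero_sub, mulVec_neg,
      neg_dotProduct_neg, not_le] at hb'
    rwa [hCtil, secularFun_mul_self_inv_zero hCbarhalf.isSymm hCbarhalf.isUnit]
  obtain ⟨lam0, hlam0, hf⟩ := exists_secularFun_eq_one hCtilPD hf₀
  have hN : IsUnit (Ctil - lam0 • 1) := (hCtilPD.sub_smul_one hlam0.le).isUnit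
  refine ⟨lam0, isLeast_spectrum_fromBlocks hCtilPD hlam0.le hf, by simpa using hN.neg, ?_⟩
  intro xstar
  have hxstar : Bhalf *ᵥ (xstar - b) = -lam0 • (Ctil - lam0 • 1)⁻¹ *ᵥ cbar := by
    rw [add_sub_cancel_left, mulVec_smul, ← mulVec_mulVec,
      mulVec_nonsing_inv_mulVec hBhalf.isUnit, ← neg_sub, nonsing_inv_neg hN, neg_mulVec, smul_neg,
      neg_smul]
  rw [hCtil] at hf hxstar
  obtain ⟨hbd, hmin⟩ := touching_point_of_ellipsoids_whitened hCbarhalf cbar hlam0.le hf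
  refine ⟨(hmem xstar).mpr (by rw [ellipsoid, Set.mem_ofPred_eq, hxstar, hbd]),
    fun x hx hne => ?_⟩
  rw [hobj, hobj, hxstar]
  refine hmin _ ((hmem x).mp hx) fun h => hne ?_
  rw [← hxstar] at h
  exact sub_left_injective (mulVec_injective_iff_isUnit.mpr hBhalf.isUnit h)

/-- The paper's Lemma 2 (Rimon–Boyd): for positive definite `B, C` and centers `b ∉ E(C, c)`,
with `C̄ = B^{-1/2} C B^{-1/2}`, `c̄ = B^{1/2}(c − b)`, `C̃ = C̄⁻¹`, `c̃ = C̄^{-1/2} c̄`, the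
`2n × 2n` block matrix `M' = [[C̃, −I], [−c̃c̃ᵀ, C̃]]` has a real eigenvalue; its smallest
real eigenvalue `λ₀` makes `λ₀ I − C̃` invertible, and
`x* = b + λ₀ B^{-1/2} (λ₀ I − C̃)^{-1} c̄` is the unique minimizer of
`x ↦ (x − b)ᵀ B (x − b)` over `E(C, c)`. -/
theorem touching_point_of_ellipsoids
    {n : ℕ} (B C : Matrix (Fin n) (Fin n) ℝ) (hB : B.PosDef) (hC : C.PosDef)
    (b c : Fin n → ℝ) (hb : b ∉ ellipsoid C c)
    (Bhalf : Matrix (Fin n) (Fin n) ℝ) (hBhalf : Bhalf.PosDef) (hBsq : Bhalf * Bhalf = B)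
    (Cbarhalf : Matrix (Fin n) (Fin n) ℝ) (hCbarhalf : Cbarhalf.PosDef)
    (hCbarsq : Cbarhalf * Cbarhalf = Bhalf⁻¹ * C * Bhalf⁻¹) :
    let Ctil : Matrix (Fin n) (Fin n) ℝ := (Bhalf⁻¹ * C * Bhalf⁻¹)⁻¹
    let cbar : Fin n → ℝ := Bhalf.mulVec (c - b)
    let ctil : Fin n → ℝ := Cbarhalf⁻¹.mulVec cbar
    let M' : Matrix (Fin n ⊕ Fin n) (Fin n ⊕ Fin n) ℝ :=
      Matrix.fromBlocks Ctil (-1) (-(vecMulVec ctil ctil)) Ctil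
    ∃ lam0 : ℝ, IsLeast (spectrum ℝ M') lam0 ∧
      IsUnit (lam0 • (1 : Matrix (Fin n) (Fin n) ℝ) - Ctil) ∧
      (let xstar : Fin n → ℝ :=
        b + lam0 • (Bhalf⁻¹ * (lam0 • (1 : Matrix (Fin n) (Fin n) ℝ) - Ctil)⁻¹).mulVec cbar
       xstar ∈ ellipsoid C c ∧
       ∀ x ∈ ellipsoid C c, x ≠ xstar →
         (xstar - b) ⬝ᵥ B.mulVec (xstar - b) < (x - b) ⬝ᵥ B.mulVec (x - b)) :=
  touching_point_of_ellipsoids_general B C b c hb Bhalf hBhalf hBsq Cbarhalf hCbarhalf hCbarsq
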